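/- Let m, n ≥ 1, let x be a vertex of G_m and y a vertex of G_n, and let G' = Sub(G_m ⊔ G_n; x, y) be the graph obtained from the disjoint union G_m ⊔ G_n by the subdivision operation at the pair x, y. Then G' is connected, the induced subgraphs of G' on V(G_m) and on V(G_n) are G_m and G_n respectively, and the independence number of G' equals m + n. -/

import Mathlib

/-- The vertex set of the graph `Gₘ`: `Sum.inl i` is the vertex `a_{i+1}` (for `0 ≤ i < m`),
`Sum.inr (Sum.inl i)` is `b_{i+1}`, and `Sum.inr (Sum.inr j)` is `c_{j+2}`. -/
abbrev GV (m : ℕ) := Fin m ⊕ Fin m ⊕ Fin (m - 1)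

/-- The vertex `a_{i+1}` of `Gₘ`. -/
def aV {m : ℕ} (i : Fin m) : GV m := Sum.inl i
/-- The vertex `b_{i+1}` of `Gₘ`. -/
def bV {m : ℕ} (i : Fin m) : GV m := Sum.inr (Sum.inl i)
/-- The vertex `c_{j+2}` of `Gₘ`. -/
def cV {m : ℕ} (j : Fin (m - 1)) : GV m := Sum.inr (Sum.inr j)

/-- Half of the adjacency relation of `Gₘ` (the full relation is its symmetrization):
the edges `a_i a_{i+1}`, `a_i b_i`, `b_i c_{i+1}`, `b_i c_i`, `c_i a_{i+1}` (1-based indices). -/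
def adjHalf (m : ℕ) : GV m → GV m → Bool
  | Sum.inl i, Sum.inl j => decide (i.val + 1 = j.val)
  | Sum.inl i, Sum.inr (Sum.inl j) => decide (i = j)
  | Sum.inl _, Sum.inr (Sum.inr _) => false
  | Sum.inr (Sum.inl _), Sum.inl _ => false
  | Sum.inr (Sum.inl _), Sum.inr (Sum.inl _) => false
  | Sum.inr (Sum.inl i), Sum.inr (Sum.inr j) => decide (i.val = j.val ∨ i.val = j.val + 1)
  | Sum.inr (Sum.inr j), Sum.inl i => decide (i.val = j.val + 2)
  | Sum.inr (Sum.inr _), Sum.inr (Sum.inl _) => false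
  | Sum.inr (Sum.inr _), Sum.inr (Sum.inr _) => false

/-- The graph `Gₘ` from the paper (with `3m - 1` vertices). -/
def Gm (m : ℕ) : SimpleGraph (GV m) where
  Adj u v := adjHalf m u v = true ∨ adjHalf m v u = true
  symm := ⟨fun _ _ h => h.symm⟩
  loopless := by
    constructor
    rintro (i | i | j) h <;> simp [adjHalf] at h

instance (m : ℕ) : DecidableRel (Gm m).Adj := fun u v =>
  inferInstanceAs (Decidable (adjHalf m u v = true ∨ adjHalf m v u = true))

/-- The graph `Sub(G; x, y)` obtained from `G` by adding the edge `xy` together with a new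
vertex `a = Sum.inr ()` joined to every neighbor of `x` or `y`. -/
def SubG {V : Type*} (G : SimpleGraph V) (x y : V) (hxy : x ≠ y) :
    SimpleGraph (V ⊕ Unit) where
  Adj u v :=
    match u, v with
    | Sum.inl u, Sum.inl v => G.Adj u v ∨ (u = x ∧ v = y) ∨ (u = y ∧ v = x)
    | Sum.inl u, Sum.inr _ => G.Adj u x ∨ G.Adj u y
    | Sum.inr _, Sum.inl v => G.Adj v x ∨ G.Adj v y
    | Sum.inr _, Sum.inr _ => False
  symm := by
    constructor
    rintro (u | u) (v | v) h
    · rcases h with h | ⟨h1, h2⟩ | ⟨h1, h2⟩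
      · exact Or.inl h.symm
      · exact Or.inr (Or.inr ⟨h2, h1⟩)
      · exact Or.inr (Or.inl ⟨h2, h1⟩)
    · exact h
    · exact h
    · exact h
  loopless := by
    constructor
    rintro (u | u) h
    · rcases h with h | ⟨h1, h2⟩ | ⟨h1, h2⟩
      · exact G.loopless.irrefl u h
      · exact hxy (h1.symm.trans h2)
      · exact hxy (h2.symm.trans h1)
    · exact h

/-- The disjoint union of two simple graphs. -/
def DisjUnion {α β : Type*} (G : SimpleGraph α) (H : SimpleGraph β) :
    SimpleGraph (α ⊕ β) where
  Adj u v :=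
    match u, v with
    | Sum.inl a, Sum.inl b => G.Adj a b
    | Sum.inr a, Sum.inr b => H.Adj a b
    | _, _ => False
  symm := by
    constructor
    rintro (a | a) (b | b) h
    · exact G.symm.symm _ _ h
    · exact h.elim
    · exact h.elim
    · exact H.symm.symm _ _ h
  loopless := by
    constructor
    rintro (a | a) h
    · exact G.loopless.irrefl a h
    · exact H.loopless.irrefl a h

/-- The independence number of a graph: the maximum cardinality of an independent set. -/
noncomputable def indepNum {V : Type*} (G : SimpleGraph V) : ℕ :=
  sSup {k | ∃ s : Finset V, s.card = k ∧ ∀ u ∈ s, ∀ v ∈ s, ¬ G.Adj u v}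

open Finset

lemma abc : ∀ (m : ℕ) (A B C : Finset ℕ), A ⊆ range m → B ⊆ range m → C ⊆ range (m-1) →
    (∀ i ∈ A, i+1 ∉ A) → (∀ i ∈ A, i ∉ B) →
    (∀ j ∈ C, j ∉ B ∧ j+1 ∉ B ∧ j+2 ∉ A) →
    A.card + B.card + C.card ≤ m := by
  intro m
  induction m using Nat.strong_induction_on with
  | _ m ih =>
    match m with
    | 0 =>
      intro A B C hA hB hC _ _ _
      simp only [Nat.zero_sub, range_zero, subset_empty] at hA hB hC
      simp [hA, hB, hC]
    | 1 =>
      intro A B C hA hB hC _ hAB _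
      simp only [Nat.sub_self, range_zero, subset_empty] at hC
      have hCe : C = ∅ := hC
      have h1 : A.card + B.card = (A ∪ B).card := by
        rw [card_union_of_disjoint]
        exact disjoint_left.2 fun i hi => hAB i hi
      have hC0 : C.card = 0 := by simp [hCe]
      have h2 : (A ∪ B).card ≤ 1 := by
        calc (A ∪ B).card ≤ (range 1).card := card_le_card (union_subset hA hB)
        _ = 1 := by simp
      omega
    | (k+2) =>
      intro A B C hA hB hC hAA hAB hCc
      by_cases hc : k ∈ C
      · obtain ⟨hb1, hb2, ha2⟩ := hCc k hc
        by_cases ha : k+1 ∈ A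
        · -- recurse at k
          have hkA : k ∉ A := fun h => hAA k h ha
          have key := ih k (by omega) (A.erase (k+1)) B (C.erase k)
            (fun i hi => by
              have h1 := (mem_erase.1 hi).2
              have h2 := mem_range.1 (hA h1)
              have h3 := (mem_erase.1 hi).1
              have : i ≠ k := fun he => hkA (he ▸ h1)
              exact mem_range.2 (by omega))
            (fun i hi => by
              have h2 := mem_range.1 (hB hi)
              have : i ≠ k := fun he => hb1 (he ▸ hi)
              have : i ≠ k+1 := fun he => hb2 (he ▸ hi)
              exact mem_range.2 (by omega))
            (fun j hj => by
              have h1 := (mem_erase.1 hj).2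
              have h2 := mem_range.1 (hC h1)
              have h3 := (mem_erase.1 hj).1
              have : j + 2 ≠ k + 1 := fun he => (hCc j h1).2.2 (he ▸ ha)
              exact mem_range.2 (by omega))
            (fun i hi => fun h => hAA i (mem_erase.1 hi).2 (mem_of_mem_erase h))
            (fun i hi => hAB i (mem_erase.1 hi).2)
            (fun j hj => ⟨(hCc j (mem_erase.1 hj).2).1, (hCc j (mem_erase.1 hj).2).2.1,
              fun h => (hCc j (mem_erase.1 hj).2).2.2 (mem_of_mem_erase h)⟩)
          have c1 : (A.erase (k+1)).card = A.card - 1 := card_erase_of_mem ha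
          have c2 : (C.erase k).card = C.card - 1 := card_erase_of_mem hc
          have p1 : 1 ≤ A.card := card_pos.2 ⟨_, ha⟩
          have p2 : 1 ≤ C.card := card_pos.2 ⟨_, hc⟩
          omega
        · -- recurse at k+1
          have key := ih (k+1) (by omega) A B (C.erase k)
            (fun i hi => by
              have h2 := mem_range.1 (hA hi)
              have : i ≠ k+1 := fun he => ha (he ▸ hi)
              exact mem_range.2 (by omega))
            (fun i hi => by
              have h2 := mem_range.1 (hB hi)
              have : i ≠ k+1 := fun he => hb2 (he ▸ hi)
              exact mem_range.2 (by omega))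
            (fun j hj => by
              have h1 := (mem_erase.1 hj).2
              have h2 := mem_range.1 (hC h1)
              have h3 := (mem_erase.1 hj).1
              exact mem_range.2 (by omega))
            hAA hAB
            (fun j hj => hCc j (mem_erase.1 hj).2)
          have c2 : (C.erase k).card = C.card - 1 := card_erase_of_mem hc
          have p2 : 1 ≤ C.card := card_pos.2 ⟨_, hc⟩
          omega
      · -- k ∉ C : recurse at k+1 with erased tops
        have key := ih (k+1) (by omega) (A.erase (k+1)) (B.erase (k+1)) C
          (fun i hi => by
            have h2 := mem_range.1 (hA (mem_erase.1 hi).2)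
            have h3 := (mem_erase.1 hi).1
            exact mem_range.2 (by omega))
          (fun i hi => by
            have h2 := mem_range.1 (hB (mem_erase.1 hi).2)
            have h3 := (mem_erase.1 hi).1
            exact mem_range.2 (by omega))
          (fun j hj => by
            have h2 := mem_range.1 (hC hj)
            have : j ≠ k := fun he => hc (he ▸ hj)
            exact mem_range.2 (by omega))
          (fun i hi h => hAA i (mem_erase.1 hi).2 (mem_of_mem_erase h))
          (fun i hi h => hAB i (mem_erase.1 hi).2 (mem_of_mem_erase h))
          (fun j hj => ⟨fun h => (hCc j hj).1 (mem_of_mem_erase h),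
            fun h => (hCc j hj).2.1 (mem_of_mem_erase h),
            fun h => (hCc j hj).2.2 (mem_of_mem_erase h)⟩)
        by_cases hA1 : k+1 ∈ A
        · have hB1 : k+1 ∉ B := fun h => hAB _ hA1 h
          have c1 := card_erase_of_mem hA1
          have c2 : B.erase (k+1) = B := erase_eq_of_notMem hB1
          have p1 : 1 ≤ A.card := card_pos.2 ⟨_, hA1⟩
          rw [c2] at key; omega
        · have c1 : A.erase (k+1) = A := erase_eq_of_notMem hA1
          rw [c1] at key
          by_cases hB1 : k+1 ∈ B
          · have c2 := card_erase_of_mem hB1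
            have p2 : 1 ≤ B.card := card_pos.2 ⟨_, hB1⟩
            omega
          · have c2 : B.erase (k+1) = B := erase_eq_of_notMem hB1
            rw [c2] at key; omega


lemma indep_card_le (m : ℕ) (t : Finset (GV m))
    (ht : ∀ u ∈ t, ∀ v ∈ t, ¬ (Gm m).Adj u v) : t.card ≤ m := by
  classical
  have habc := abc m (t.toLeft.image Fin.val) (t.toRight.toLeft.image Fin.val)
      (t.toRight.toRight.image Fin.val)
  have cA : (t.toLeft.image Fin.val).card = t.toLeft.card :=
    card_image_of_injective _ Fin.val_injective
  have cB : (t.toRight.toLeft.image Fin.val).card = t.toRight.toLeft.card :=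
    card_image_of_injective _ Fin.val_injective
  have cC : (t.toRight.toRight.image Fin.val).card = t.toRight.toRight.card :=
    card_image_of_injective _ Fin.val_injective
  have ct : t.toLeft.card + t.toRight.card = t.card := card_toLeft_add_card_toRight
  have ct2 : t.toRight.toLeft.card + t.toRight.toRight.card = t.toRight.card :=
    card_toLeft_add_card_toRight
  have key := habc
    (by intro i hi; simp only [mem_image, mem_toLeft] at hi
        obtain ⟨p, _, rfl⟩ := hi; exact mem_range.2 p.isLt)
    (by intro i hi; simp only [mem_image, mem_toLeft, mem_toRight] at hi
        obtain ⟨p, _, rfl⟩ := hi; exact mem_range.2 p.isLt)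
    (by intro i hi; simp only [mem_image, mem_toRight] at hi
        obtain ⟨p, _, rfl⟩ := hi; exact mem_range.2 p.isLt)
    (by intro i hi hi2
        simp only [mem_image, mem_toLeft] at hi hi2
        obtain ⟨p, hp, rfl⟩ := hi
        obtain ⟨q, hq, hq2⟩ := hi2
        exact ht _ hp _ hq (Or.inl (by simp [adjHalf, hq2.symm]))
        )
    (by intro i hi hi2
        simp only [mem_image, mem_toLeft, mem_toRight] at hi hi2
        obtain ⟨p, hp, rfl⟩ := hi
        obtain ⟨q, hq, hq2⟩ := hi2
        have : p = q := Fin.val_injective hq2.symm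
        exact ht _ hp _ hq (Or.inl (by simp [adjHalf, this]))
        )
    (by intro j hj
        simp only [mem_image, mem_toRight] at hj
        obtain ⟨p, hp, rfl⟩ := hj
        refine ⟨?_, ?_, ?_⟩
        · intro hb
          simp only [mem_image, mem_toLeft, mem_toRight] at hb
          obtain ⟨q, hq, hq2⟩ := hb
          exact ht _ hq _ hp (Or.inl (by simp [adjHalf]; omega))
        · intro hb
          simp only [mem_image, mem_toLeft, mem_toRight] at hb
          obtain ⟨q, hq, hq2⟩ := hb
          exact ht _ hq _ hp (Or.inl (by simp [adjHalf]; omega))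
        · intro hb
          simp only [mem_image, mem_toLeft] at hb
          obtain ⟨q, hq, hq2⟩ := hb
          exact ht _ hq _ hp (Or.inr (by simp [adjHalf]; omega)))
  omega

lemma gm_exists_nb (m : ℕ) (x : GV m) : ∃ w, (Gm m).Adj x w := by
  rcases x with i | i | j
  · exact ⟨Sum.inr (Sum.inl i), Or.inl (by simp [adjHalf])⟩
  · exact ⟨Sum.inl i, Or.inr (by simp [adjHalf])⟩
  · have hj : j.val < m := by have := j.isLt; omega
    exact ⟨Sum.inr (Sum.inl ⟨j.val, hj⟩), Or.inr (by simp [adjHalf])⟩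

lemma gm_reach (m : ℕ) (hm : 1 ≤ m) (v : GV m) :
    (Gm m).Reachable v (Sum.inl ⟨0, hm⟩) := by
  have ha : ∀ k (h : k < m), (Gm m).Reachable (Sum.inl ⟨k, h⟩) (Sum.inl ⟨0, hm⟩) := by
    intro k
    induction k with
    | zero => intro h; rfl
    | succ k ihk =>
      intro h
      have h' : k < m := Nat.lt_of_succ_lt h
      have hadj : (Gm m).Adj (Sum.inl ⟨k+1, h⟩) (Sum.inl ⟨k, h'⟩) :=
        Or.inr (by simp [adjHalf])
      exact hadj.reachable.trans (ihk h')
  have hb : ∀ i : Fin m, (Gm m).Reachable (Sum.inr (Sum.inl i)) (Sum.inl ⟨0, hm⟩) := by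
    intro i
    have hadj : (Gm m).Adj (Sum.inr (Sum.inl i)) (Sum.inl i) := Or.inr (by simp [adjHalf])
    exact hadj.reachable.trans (ha i.val i.isLt)
  rcases v with i | i | j
  · exact ha i.val i.isLt
  · exact hb i
  · have hj : j.val < m := by have := j.isLt; omega
    have hadj : (Gm m).Adj (Sum.inr (Sum.inr j)) (Sum.inr (Sum.inl ⟨j.val, hj⟩)) :=
      Or.inr (by simp [adjHalf])
    exact hadj.reachable.trans (hb _)

lemma not_adj_bb (m : ℕ) (i j : Fin m) :
    ¬ (Gm m).Adj (Sum.inr (Sum.inl i)) (Sum.inr (Sum.inl j)) := by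
  rintro (h | h) <;> simp [adjHalf] at h

/-- Let `x` be a vertex of `Gₘ` and `y` a vertex of `Gₙ`, and let
`G' = Sub(Gₘ ⊔ Gₙ; x, y)`. Then `G'` is connected, the induced subgraphs of `G'` on the
vertex sets of `Gₘ` and `Gₙ` are `Gₘ` and `Gₙ` respectively, and `α(G') = m + n`. -/
theorem subG_disjUnion_Gm_Gn (m n : ℕ) (hm : 1 ≤ m) (hn : 1 ≤ n)
    (x : GV m) (y : GV n) :
    let G' := SubG (DisjUnion (Gm m) (Gm n)) (Sum.inl x) (Sum.inr y) Sum.inl_ne_inr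
    G'.Connected ∧
    (∀ u v : GV m, G'.Adj (Sum.inl (Sum.inl u)) (Sum.inl (Sum.inl v)) ↔ (Gm m).Adj u v) ∧
    (∀ u v : GV n, G'.Adj (Sum.inl (Sum.inr u)) (Sum.inl (Sum.inr v)) ↔ (Gm n).Adj u v) ∧
    indepNum G' = m + n := by
  intro G'
  classical
  have iffL : ∀ u v : GV m,
      G'.Adj (Sum.inl (Sum.inl u)) (Sum.inl (Sum.inl v)) ↔ (Gm m).Adj u v := by
    intro u v
    constructor
    · rintro (h | ⟨h1, h2⟩ | ⟨h1, h2⟩)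
      · exact h
      · exact absurd h2 (by simp)
      · exact absurd h1 (by simp)
    · intro h; exact Or.inl h
  have iffR : ∀ u v : GV n,
      G'.Adj (Sum.inl (Sum.inr u)) (Sum.inl (Sum.inr v)) ↔ (Gm n).Adj u v := by
    intro u v
    constructor
    · rintro (h | ⟨h1, h2⟩ | ⟨h1, h2⟩)
      · exact h
      · exact absurd h1 (by simp)
      · exact absurd h2 (by simp)
    · intro h; exact Or.inl h
  refine ⟨?_, iffL, iffR, ?_⟩
  · -- connectivity
    have hreach : ∀ w : (GV m ⊕ GV n) ⊕ Unit, G'.Reachable w (Sum.inl (Sum.inl x)) := by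
      let fL : Gm m →g G' :=
        ⟨fun v => Sum.inl (Sum.inl v), fun h => Or.inl h⟩
      let fR : Gm n →g G' :=
        ⟨fun v => Sum.inl (Sum.inr v), fun h => Or.inl h⟩
      have hyx : G'.Adj (Sum.inl (Sum.inr y)) (Sum.inl (Sum.inl x)) :=
        Or.inr (Or.inr ⟨rfl, rfl⟩)
      rintro ((u | v) | u)
      · have h1 := ((gm_reach m hm u).trans (gm_reach m hm x).symm).map fL
        exact h1
      · have h1 := ((gm_reach n hn v).trans (gm_reach n hn y).symm).map fR
        exact h1.trans hyx.reachable
      · obtain ⟨w, hw⟩ := gm_exists_nb m x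
        have hadj : G'.Adj (Sum.inr u) (Sum.inl (Sum.inl w)) :=
          Or.inl ((Gm m).symm.symm _ _ hw)
        have h1 := ((gm_reach m hm w).trans (gm_reach m hm x).symm).map fL
        exact hadj.reachable.trans h1
    constructor
    intro u v
    exact (hreach u).trans (hreach v).symm
  · -- independence number
    have hub : ∀ k ∈ {k | ∃ s : Finset ((GV m ⊕ GV n) ⊕ Unit),
        s.card = k ∧ ∀ u ∈ s, ∀ v ∈ s, ¬ G'.Adj u v}, k ≤ m + n := by
      rintro k ⟨s, rfl, hind⟩
      set sL := s.toLeft.toLeft with hsL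
      set sR := s.toLeft.toRight with hsR
      have memL : ∀ u : GV m, u ∈ sL ↔ Sum.inl (Sum.inl u) ∈ s := by
        intro u; simp [hsL]
      have memR : ∀ u : GV n, u ∈ sR ↔ Sum.inl (Sum.inr u) ∈ s := by
        intro u; simp [hsR]
      have hLind : ∀ u ∈ sL, ∀ v ∈ sL, ¬ (Gm m).Adj u v := by
        intro u hu v hv h
        exact hind _ ((memL u).1 hu) _ ((memL v).1 hv) (Or.inl h)
      have hRind : ∀ u ∈ sR, ∀ v ∈ sR, ¬ (Gm n).Adj u v := by
        intro u hu v hv h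
        exact hind _ ((memR u).1 hu) _ ((memR v).1 hv) (Or.inl h)
      have cards : s.card = sL.card + sR.card + s.toRight.card := by
        rw [hsL, hsR]
        have h1 := @Finset.card_toLeft_add_card_toRight _ _ s
        have h2 := @Finset.card_toLeft_add_card_toRight _ _ s.toLeft
        omega
      have cR1 : s.toRight.card ≤ 1 := by
        calc s.toRight.card ≤ (Finset.univ : Finset Unit).card :=
              Finset.card_le_card (Finset.subset_univ _)
        _ = 1 := rfl
      have cL := indep_card_le m sL hLind
      have cRr := indep_card_le n sR hRind
      by_cases hunit : s.toRight.card = 0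
      · omega
      · have hmem : Sum.inr () ∈ s := by
          have : s.toRight.Nonempty := Finset.card_pos.1 (by omega)
          obtain ⟨u, hu⟩ := this
          have := Finset.mem_toRight.1 hu
          cases u; exact this
        have hkey : x ∉ sL ∨ y ∉ sR := by
          by_contra hcon
          push_neg at hcon
          exact hind _ ((memL x).1 hcon.1) _ ((memR y).1 hcon.2)
            (Or.inr (Or.inl ⟨rfl, rfl⟩))
        rcases hkey with hx | hy
        · have : (insert x sL).card ≤ m := by
            apply indep_card_le m
            intro u hu v hv h
            rcases Finset.mem_insert.1 hu with rfl | hu'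
            · rcases Finset.mem_insert.1 hv with rfl | hv'
              · exact (Gm m).loopless.irrefl _ h
              · -- h : Adj x v, v ∈ sL ; contradiction with new vertex
                have hne := hind _ ((memL v).1 hv') _ hmem
                exact hne (Or.inl ((Gm m).symm.symm _ _ h))
            · rcases Finset.mem_insert.1 hv with rfl | hv'
              · have hne := hind _ ((memL u).1 hu') _ hmem
                exact hne (Or.inl h)
              · exact hLind u hu' v hv' h
          have := Finset.card_insert_of_notMem hx
          omega
        · have : (insert y sR).card ≤ n := by
            apply indep_card_le n
            intro u hu v hv h
            rcases Finset.mem_insert.1 hu with rfl | hu'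
            · rcases Finset.mem_insert.1 hv with rfl | hv'
              · exact (Gm n).loopless.irrefl _ h
              · have hne := hind _ ((memR v).1 hv') _ hmem
                exact hne (Or.inr ((Gm n).symm.symm _ _ h))
            · rcases Finset.mem_insert.1 hv with rfl | hv'
              · have hne := hind _ ((memR u).1 hu') _ hmem
                exact hne (Or.inr h)
              · exact hRind u hu' v hv' h
          have := Finset.card_insert_of_notMem hy
          omega
    have hlb : m + n ∈ {k | ∃ s : Finset ((GV m ⊕ GV n) ⊕ Unit),
        s.card = k ∧ ∀ u ∈ s, ∀ v ∈ s, ¬ G'.Adj u v} := by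
      -- choose the right-side independent set avoiding y
      have hSR : ∃ SR : Finset (GV n), SR.card = n ∧
          (∀ u ∈ SR, ∀ v ∈ SR, ¬ (Gm n).Adj u v) ∧ y ∉ SR := by
        by_cases hy : ∃ i : Fin n, y = Sum.inr (Sum.inl i)
        · refine ⟨insert (Sum.inl ⟨0, hn⟩) (Finset.univ.image (fun j : Fin (n-1) =>
            (Sum.inr (Sum.inr j) : GV n))), ?_, ?_, ?_⟩
          · rw [Finset.card_insert_of_notMem (by simp)]
            rw [Finset.card_image_of_injective _ (fun a b h => by
              simpa using h)]
            simp; omega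
          · intro u hu v hv
            have hu' : u = Sum.inl ⟨0, hn⟩ ∨ ∃ j, u = Sum.inr (Sum.inr j) := by
              rcases Finset.mem_insert.1 hu with h | h
              · exact Or.inl h
              · simp only [Finset.mem_image] at h; obtain ⟨j, _, rfl⟩ := h
                exact Or.inr ⟨j, rfl⟩
            have hv' : v = Sum.inl ⟨0, hn⟩ ∨ ∃ j, v = Sum.inr (Sum.inr j) := by
              rcases Finset.mem_insert.1 hv with h | h
              · exact Or.inl h
              · simp only [Finset.mem_image] at h; obtain ⟨j, _, rfl⟩ := h
                exact Or.inr ⟨j, rfl⟩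
            rcases hu' with rfl | ⟨j, rfl⟩ <;> rcases hv' with rfl | ⟨j', rfl⟩ <;>
              rintro (h | h) <;> simp [adjHalf] at h
          · obtain ⟨i, rfl⟩ := hy
            simp
        · refine ⟨Finset.univ.image (fun i : Fin n =>
            (Sum.inr (Sum.inl i) : GV n)), ?_, ?_, ?_⟩
          · rw [Finset.card_image_of_injective _ (fun a b h => by simpa using h)]
            simp
          · intro u hu v hv
            simp only [Finset.mem_image] at hu hv
            obtain ⟨i, _, rfl⟩ := hu
            obtain ⟨j, _, rfl⟩ := hv
            exact not_adj_bb n i j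
          · intro hmem
            simp only [Finset.mem_image] at hmem
            obtain ⟨i, _, hi⟩ := hmem
            exact hy ⟨i, hi.symm⟩
      obtain ⟨SR, hSRcard, hSRind, hySR⟩ := hSR
      refine ⟨(Finset.univ.image (fun i : Fin m =>
          (Sum.inl (Sum.inl (Sum.inr (Sum.inl i))) : (GV m ⊕ GV n) ⊕ Unit))) ∪
          (SR.image (fun v => Sum.inl (Sum.inr v))), ?_, ?_⟩
      · rw [Finset.card_union_of_disjoint]
        · rw [Finset.card_image_of_injective _ (fun a b h => by simpa using h),
            Finset.card_image_of_injective _ (fun a b h => by simpa using h)]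
          simp [hSRcard]
        · rw [Finset.disjoint_left]
          rintro a ha ha'
          simp only [Finset.mem_image] at ha ha'
          obtain ⟨i, _, rfl⟩ := ha
          obtain ⟨v, _, hv⟩ := ha'
          simp at hv
      · intro u hu v hv
        have hforms : ∀ w ∈ (Finset.univ.image (fun i : Fin m =>
            (Sum.inl (Sum.inl (Sum.inr (Sum.inl i))) : (GV m ⊕ GV n) ⊕ Unit))) ∪
            (SR.image (fun v => Sum.inl (Sum.inr v))),
            (∃ i : Fin m, w = Sum.inl (Sum.inl (Sum.inr (Sum.inl i)))) ∨
            (∃ p, p ∈ SR ∧ w = Sum.inl (Sum.inr p)) := by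
          intro w hw
          rcases Finset.mem_union.1 hw with h | h
          · simp only [Finset.mem_image] at h
            obtain ⟨i, _, rfl⟩ := h
            exact Or.inl ⟨i, rfl⟩
          · simp only [Finset.mem_image] at h
            obtain ⟨p, hp, rfl⟩ := h
            exact Or.inr ⟨p, hp, rfl⟩
        rcases hforms u hu with ⟨i, rfl⟩ | ⟨p, hp, rfl⟩ <;>
          rcases hforms v hv with ⟨i', rfl⟩ | ⟨p', hp', rfl⟩
        · rintro (h | ⟨h1, h2⟩ | ⟨h1, h2⟩)
          · exact not_adj_bb m _ _ h
          · exact absurd h2 (by simp)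
          · exact absurd h1 (by simp)
        · rintro (h | ⟨h1, h2⟩ | ⟨h1, h2⟩)
          · exact h
          · -- h1 : inl (bV i) = inl x, h2 : inr p' = inr y
            have : p' = y := by simpa using h2
            exact hySR (this ▸ hp')
          · exact absurd h1 (by simp)
        · rintro (h | ⟨h1, h2⟩ | ⟨h1, h2⟩)
          · exact h
          · exact absurd h1 (by simp)
          · have : p = y := by simpa using h1
            exact hySR (this ▸ hp)
        · rintro (h | ⟨h1, h2⟩ | ⟨h1, h2⟩)
          · exact hSRind p hp p' hp' h
          · exact absurd h1 (by simp)
          · exact absurd h2 (by simp)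
    apply le_antisymm
    · exact csSup_le ⟨m + n, hlb⟩ hub
    · exact le_csSup ⟨m + n, hub⟩ hlb
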